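/- Let n ∈ ℕ, n ≥ 1, let μ ∈ ℝ with μ ≠ 0, and set l = 2(μ − 1)/μ. Let u, v : ℝ^n → ℝ be twice continuously differentiable with v(x) > 0 for all x. Then the pair (u, v^μ) satisfies the stationary wave-map system Δu − (l/v^μ)∇u·∇(v^μ) = 0 and Δ(v^μ) + (l/(2v^μ))(|∇u|² − |∇(v^μ)|²) = 0 on ℝ^n if and only if (u, v) satisfies Δu − (2(μ − 1)/v)∇u·∇v = 0 and Δv + ((μ − 1)/μ²)·v^{1 − 2μ}·|∇u|² = 0 on ℝ^n. -/

import Mathlib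

noncomputable section

def pd {n : ℕ} (f : EuclideanSpace ℝ (Fin n) → ℝ) (x : EuclideanSpace ℝ (Fin n))
    (i : Fin n) : ℝ :=
  fderiv ℝ f x (EuclideanSpace.single i 1)

def lapl {n : ℕ} (f : EuclideanSpace ℝ (Fin n) → ℝ) (x : EuclideanSpace ℝ (Fin n)) : ℝ :=
  ∑ i, pd (fun y => pd f y i) x i

def gradDot {n : ℕ} (f g : EuclideanSpace ℝ (Fin n) → ℝ)
    (x : EuclideanSpace ℝ (Fin n)) : ℝ :=
  ∑ i, pd f x i * pd g x i

/-!
Writing `w = v^μ`, the chain rule gives `∇w = μ v^{μ-1} ∇v` and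
`Δw = μ(μ-1) v^{μ-2} |∇v|² + μ v^{μ-1} Δv`. Substituting, the first wave-map equation for
`(u, w)` becomes literally the first equation for `(u, v)`, and the second one becomes
`μ v^{μ-1}` times the second equation for `(u, v)`; the choice `l = 2(μ-1)/μ` is exactly what
cancels the `|∇v|²` terms. Since `μ v^{μ-1} ≠ 0`, the two systems are equivalent.
-/

section PartialDerivatives

variable {n : ℕ} {f g v : EuclideanSpace ℝ (Fin n) → ℝ} {x : EuclideanSpace ℝ (Fin n)}

lemma pd_mul (hf : DifferentiableAt ℝ f x) (hg : DifferentiableAt ℝ g x) (i : Fin n) :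
    pd (fun y => f y * g y) x i = f x * pd g x i + g x * pd f x i := by
  simp [pd, fderiv_fun_mul hf hg]

lemma pd_const_mul (hf : DifferentiableAt ℝ f x) (c : ℝ) (i : Fin n) :
    pd (fun y => c * f y) x i = c * pd f x i := by
  simp [pd, fderiv_const_mul hf]

lemma pd_rpow_const (hv : DifferentiableAt ℝ v x) (hx : v x ≠ 0) (c : ℝ) (i : Fin n) :
    pd (fun y => v y ^ c) x i = c * v x ^ (c - 1) * pd v x i := by
  simp [pd, (hv.hasFDerivAt.rpow_const (p := c) (Or.inl hx)).fderiv]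

lemma differentiable_pd (hv : ContDiff ℝ 2 v) (i : Fin n) :
    Differentiable ℝ (fun y => pd v y i) :=
  ((ContinuousLinearMap.apply ℝ ℝ (EuclideanSpace.single i (1 : ℝ))).contDiff.comp
    (hv.fderiv_right (m := 1) (by norm_num))).differentiable (by norm_num)

lemma gradDot_rpow_const_right (u : EuclideanSpace ℝ (Fin n) → ℝ)
    (hv : DifferentiableAt ℝ v x) (hx : v x ≠ 0) (c : ℝ) :
    gradDot u (fun y => v y ^ c) x = c * v x ^ (c - 1) * gradDot u v x := by
  simp only [gradDot, Finset.mul_sum, pd_rpow_const hv hx]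
  exact Finset.sum_congr rfl fun i _ => by ring

lemma gradDot_rpow_const_self (hv : DifferentiableAt ℝ v x) (hx : v x ≠ 0) (c : ℝ) :
    gradDot (fun y => v y ^ c) (fun y => v y ^ c) x
      = (c * v x ^ (c - 1)) ^ 2 * gradDot v v x := by
  simp only [gradDot, Finset.mul_sum, pd_rpow_const hv hx]
  exact Finset.sum_congr rfl fun i _ => by ring

lemma lapl_rpow_const (hv : ContDiff ℝ 2 v) (hv0 : ∀ y, v y ≠ 0) (c : ℝ) :
    lapl (fun y => v y ^ c) x
      = c * (c - 1) * v x ^ (c - 2) * gradDot v v x + c * v x ^ (c - 1) * lapl v x := by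
  have hvd : Differentiable ℝ v := hv.differentiable (by norm_num)
  have hpow : DifferentiableAt ℝ (fun y => v y ^ (c - 1)) x :=
    (hvd x).rpow_const (Or.inl (hv0 x))
  have hpd_pow : ∀ i, (fun y => pd (fun z => v z ^ c) y i)
      = fun y => (c * v y ^ (c - 1)) * pd v y i := fun i => by
    funext y
    exact pd_rpow_const (hvd y) (hv0 y) c i
  have hsummand : ∀ i : Fin n, pd (fun y => pd (fun z => v z ^ c) y i) x i
      = c * (c - 1) * v x ^ (c - 2) * (pd v x i * pd v x i)
        + c * v x ^ (c - 1) * pd (fun y => pd v y i) x i := fun i => by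
    rw [hpd_pow, pd_mul (hpow.const_mul c) (differentiable_pd hv i x), pd_const_mul hpow,
      pd_rpow_const (hvd x) (hv0 x), show c - 1 - 1 = c - 2 by ring]
    ring
  simp only [lapl, gradDot, hsummand, Finset.sum_add_distrib, ← Finset.mul_sum]

end PartialDerivatives

lemma rpow_first_equation_coeff {w μ : ℝ} (hw : 0 < w) (hμ : μ ≠ 0) (g : ℝ) :
    2 * (μ - 1) / μ / w ^ μ * (μ * w ^ (μ - 1) * g) = 2 * (μ - 1) / w * g := by
  have hwμ : w ^ μ ≠ 0 := (Real.rpow_pos_of_pos hw μ).ne'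
  rw [Real.rpow_sub_one hw.ne']
  field_simp

lemma rpow_second_equation_factor {w μ : ℝ} (hw : 0 < w) (hμ : μ ≠ 0) (G L U : ℝ) :
    μ * (μ - 1) * w ^ (μ - 2) * G + μ * w ^ (μ - 1) * L
        + 2 * (μ - 1) / μ / (2 * w ^ μ) * (U - (μ * w ^ (μ - 1)) ^ 2 * G)
      = μ * w ^ (μ - 1) * (L + (μ - 1) / μ ^ 2 * w ^ (1 - 2 * μ) * U) := by
  have hwμ : w ^ μ ≠ 0 := (Real.rpow_pos_of_pos hw μ).ne'
  have hpow_sub_two : w ^ (μ - 2) = w ^ μ / w / w := by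
    rw [show μ - 2 = μ - 1 - 1 by ring, Real.rpow_sub_one hw.ne', Real.rpow_sub_one hw.ne']
  have hpow_one_sub : w ^ (1 - 2 * μ) = w / (w ^ μ * w ^ μ) := by
    rw [show 1 - 2 * μ = 1 - (μ + μ) by ring, Real.rpow_sub hw, Real.rpow_one,
      Real.rpow_add hw]
  rw [hpow_sub_two, hpow_one_sub, Real.rpow_sub_one hw.ne']
  field_simp
  ring

theorem stmt_8_general (n : ℕ) (μ : ℝ) (hμ : μ ≠ 0) (l : ℝ)
    (hl : l = 2 * (μ - 1) / μ)
    (u v : EuclideanSpace ℝ (Fin n) → ℝ)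
    (hv : ContDiff ℝ 2 v)
    (hvpos : ∀ x, 0 < v x) :
    ((∀ x, lapl u x
        - (l / (v x) ^ μ) * gradDot u (fun y => (v y) ^ μ) x = 0) ∧
     (∀ x, lapl (fun y => (v y) ^ μ) x
        + (l / (2 * (v x) ^ μ)) *
            (gradDot u u x - gradDot (fun y => (v y) ^ μ) (fun y => (v y) ^ μ) x) = 0))
    ↔
    ((∀ x, lapl u x - (2 * (μ - 1) / v x) * gradDot u v x = 0) ∧
     (∀ x, lapl v x
        + ((μ - 1) / μ ^ 2) * (v x) ^ (1 - 2 * μ) * gradDot u u x = 0)) := by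
  subst hl
  have hvd : Differentiable ℝ v := hv.differentiable (by norm_num)
  have hv0 : ∀ x, v x ≠ 0 := fun x => (hvpos x).ne'
  refine and_congr (forall_congr' fun x => ?_) (forall_congr' fun x => ?_)
  · rw [gradDot_rpow_const_right u (hvd x) (hv0 x), rpow_first_equation_coeff (hvpos x) hμ]
  · have hfactor : μ * v x ^ (μ - 1) ≠ 0 :=
      mul_ne_zero hμ (Real.rpow_pos_of_pos (hvpos x) _).ne'
    rw [lapl_rpow_const hv hv0, gradDot_rpow_const_self (hvd x) (hv0 x),
      rpow_second_equation_factor (hvpos x) hμ, mul_eq_zero, or_iff_right hfactor]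

/-- with `l = 2(μ−1)/μ`, the pair `(u, v^μ)` satisfies the
stationary wave-map system with target `ℍ²_l` iff `(u, v)` satisfies
`Δu − (2(μ−1)/v)∇u·∇v = 0` and `Δv + ((μ−1)/μ²) v^{1−2μ} |∇u|² = 0`. -/
theorem stmt_8 (n : ℕ) (hn : 1 ≤ n) (μ : ℝ) (hμ : μ ≠ 0) (l : ℝ)
    (hl : l = 2 * (μ - 1) / μ)
    (u v : EuclideanSpace ℝ (Fin n) → ℝ)
    (hu : ContDiff ℝ 2 u) (hv : ContDiff ℝ 2 v)
    (hvpos : ∀ x, 0 < v x) :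
    ((∀ x, lapl u x
        - (l / (v x) ^ μ) * gradDot u (fun y => (v y) ^ μ) x = 0) ∧
     (∀ x, lapl (fun y => (v y) ^ μ) x
        + (l / (2 * (v x) ^ μ)) *
            (gradDot u u x - gradDot (fun y => (v y) ^ μ) (fun y => (v y) ^ μ) x) = 0))
    ↔
    ((∀ x, lapl u x - (2 * (μ - 1) / v x) * gradDot u v x = 0) ∧
     (∀ x, lapl v x
        + ((μ - 1) / μ ^ 2) * (v x) ^ (1 - 2 * μ) * gradDot u u x = 0)) :=
  stmt_8_general n μ hμ l hl u v hv hvpos
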